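/- The boundary flow determines the shape. Let f be a flow on a valid ladder presentation P of length s (parameters n, ℓ, m) with terminal tuple S = S^{(s)}. Then for every component index t ∈ {1,…,n}, the set { p ∈ {1,…,m} : t ∈ S_p } has exactly ℓ elements, say p_1 < p_2 < ⋯ < p_ℓ, and the t-th component of the shape of ι(P,f) is the partition whose r-th part equals p_{ℓ+1−r} − (ℓ+1−r) for r = 1,…,ℓ. In particular, the shape of ι(P,f) depends only on the terminal tuple S, and terminal tuples determine shapes bijectively. -/

import Mathlib

open scoped Classical

namespace SlnWeb

noncomputable section

/-- `p r` is the length of the `r`-th row (0-indexed) of a Young diagram. -/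
def IsPartition (p : ℕ → ℕ) : Prop :=
  Antitone p ∧ ∃ N, p N = 0

/-- The 0-indexed cell `(r, c)` lies in the Young diagram of `p`. -/
def InDiag (p : ℕ → ℕ) (r c : ℕ) : Prop :=
  c < p r

/-- Residue (with shift `ℓ`) of the 0-indexed cell `(r, c)`; for the
corresponding 1-indexed cell `(r+1, c+1)` this is `(c+1) - (r+1) + ℓ`. -/
def resOf (ℓ : ℕ) (r c : ℕ) : ℤ :=
  (c : ℤ) - (r : ℤ) + (ℓ : ℤ)

/-- `(r, c)` (0-indexed) is an addable cell of `p`. -/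
def IsAddableCell (p : ℕ → ℕ) (r c : ℕ) : Prop :=
  c = p r ∧ (r = 0 ∨ p r < p (r - 1))

/-- `(r, c)` (0-indexed) is a removable cell of `p`. -/
def IsRemovableCell (p : ℕ → ℕ) (r c : ℕ) : Prop :=
  c + 1 = p r ∧ p (r + 1) < p r

/-- Add to `p` its (unique) addable cell of residue `k`, if there is one. -/
def addRes (ℓ : ℕ) (p : ℕ → ℕ) (k : ℤ) : ℕ → ℕ :=
  if h : ∃ r, (r = 0 ∨ p r < p (r - 1)) ∧ (p r : ℤ) - (r : ℤ) + (ℓ : ℤ) = k then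
    Function.update p h.choose (p h.choose + 1)
  else p

/-- A multitableau: `shape t r` is the length of the `r`-th row (0-indexed) of
the `t`-th component (components are indexed by `t ∈ {1,…,n}`), and
`entry t r c` is the entry of the 0-indexed cell `(r, c)` of the `t`-th
component; everything is normalised to `0` outside of the diagrams. -/
structure MultiTableau where
  shape : ℕ → ℕ → ℕ
  entry : ℕ → ℕ → ℕ → ℕ

/-- A standard `n`-multitableau with entries in `{1,…,s}` (residue shift `ℓ`):
each component is a partition, components are normalised to be empty outside
of `{1,…,n}`, entries lie in `{1,…,s}` and are normalised to `0` outside the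
diagram, entries strictly increase along rows and down columns, no entry is
repeated inside a single component, and all nodes carrying the same entry have
the same residue. -/
def IsStandard (n ℓ s : ℕ) (M : MultiTableau) : Prop :=
  (∀ t, IsPartition (M.shape t)) ∧
  (∀ t, (t = 0 ∨ n < t) → ∀ r, M.shape t r = 0) ∧
  (∀ t r c, InDiag (M.shape t) r c → 1 ≤ M.entry t r c ∧ M.entry t r c ≤ s) ∧
  (∀ t r c, ¬ InDiag (M.shape t) r c → M.entry t r c = 0) ∧
  (∀ t r c c', c < c' → InDiag (M.shape t) r c' → M.entry t r c < M.entry t r c') ∧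
  (∀ t r r' c, r < r' → InDiag (M.shape t) r' c → M.entry t r c < M.entry t r' c) ∧
  (∀ t r c r' c', InDiag (M.shape t) r c → InDiag (M.shape t) r' c' →
    M.entry t r c = M.entry t r' c' → r = r' ∧ c = c') ∧
  (∀ t r c t' r' c', InDiag (M.shape t) r c → InDiag (M.shape t') r' c' →
    M.entry t r c = M.entry t' r' c' → resOf ℓ r c = resOf ℓ r' c')

/-- A ladder presentation of length `s` for the parameters `n`, `ℓ`, `m`:
the `r`-th step is `F_{i_r}^{(j_r)}` with `i_r = res r ∈ {1,…,m-1}` and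
`j_r = mult r ∈ {1,…,n}`. -/
structure LadderPresentation (n ℓ m s : ℕ) where
  res : Fin s → ℕ
  mult : Fin s → ℕ
  res_pos : ∀ r, 1 ≤ res r
  res_lt : ∀ r, res r < m
  mult_pos : ∀ r, 1 ≤ mult r
  mult_le : ∀ r, mult r ≤ n

/-- The weight sequence `k⁽⁰⁾, k⁽¹⁾, …` of a ladder presentation; positions `p`
are 1-indexed, `k⁽⁰⁾ = (n^ℓ)` and `k⁽ʳ⁾ = k⁽ʳ⁻¹⁾ - j_r·e_{i_r} + j_r·e_{i_r+1}`. -/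
def wtSeq {n ℓ m s : ℕ} (P : LadderPresentation n ℓ m s) : ℕ → ℕ → ℤ
  | 0, p => if 1 ≤ p ∧ p ≤ ℓ then (n : ℤ) else 0
  | r + 1, p =>
    if h : r < s then
      wtSeq P r p - (if p = P.res ⟨r, h⟩ then (P.mult ⟨r, h⟩ : ℤ) else 0) +
        (if p = P.res ⟨r, h⟩ + 1 then (P.mult ⟨r, h⟩ : ℤ) else 0)
    else wtSeq P r p

/-- A ladder presentation is valid if every entry of every weight in its weight
sequence lies in `{0,…,n}`. -/
def IsValid {n ℓ m s : ℕ} (P : LadderPresentation n ℓ m s) : Prop :=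
  ∀ r, r ≤ s → ∀ p, 1 ≤ p → p ≤ m → 0 ≤ wtSeq P r p ∧ wtSeq P r p ≤ (n : ℤ)

/-- A flow on a (valid) ladder presentation `P`.  `S r p ⊆ {1,…,n}` is the flow
label of the `p`-th boundary point after `r` steps (normalised to `∅` outside
`p ∈ {1,…,m}`), and `T r` is the flow label of the rung of the `r`-th ladder. -/
structure LadderFlow {n ℓ m s : ℕ} (P : LadderPresentation n ℓ m s) where
  S : Fin (s + 1) → ℕ → Finset ℕ
  T : Fin s → Finset ℕ
  S_sub : ∀ r p, S r p ⊆ Finset.Icc 1 n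
  S_outside : ∀ r p, (p = 0 ∨ m < p) → S r p = ∅
  S_card : ∀ r p, 1 ≤ p → p ≤ m → ((S r p).card : ℤ) = wtSeq P r.val p
  S_init : ∀ p, 1 ≤ p → p ≤ m → S 0 p = if p ≤ ℓ then Finset.Icc 1 n else ∅
  T_sub : ∀ r : Fin s, T r ⊆ S r.castSucc (P.res r)
  T_card : ∀ r : Fin s, (T r).card = P.mult r
  T_disj : ∀ r : Fin s, Disjoint (T r) (S r.castSucc (P.res r + 1))
  S_step_res : ∀ r : Fin s, S r.succ (P.res r) = S r.castSucc (P.res r) \ T r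
  S_step_res1 : ∀ r : Fin s, S r.succ (P.res r + 1) = S r.castSucc (P.res r + 1) ∪ T r
  S_step_other : ∀ r : Fin s, ∀ p, p ≠ P.res r → p ≠ P.res r + 1 →
    S r.succ p = S r.castSucc p

/-- Add, for every component `t ∈ Tset`, the (unique) addable cell of residue
`k` of that component, giving each of the new cells the entry `e`. -/
def stepAdd (ℓ : ℕ) (k : ℤ) (e : ℕ) (Tset : Finset ℕ) (M : MultiTableau) :
    MultiTableau where
  shape := fun t => if t ∈ Tset then addRes ℓ (M.shape t) k else M.shape t
  entry := fun t r c =>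
    if t ∈ Tset ∧ M.shape t r ≤ c ∧ c < addRes ℓ (M.shape t) k r then e
    else M.entry t r c

/-- The sequence of intermediate multitableaux built by the filling map `ι`:
at step `r` (0-indexed), for each `t ∈ T r`, the unique addable node of residue
`i_r` is added to the `t`-th component, with entry `r + 1`. -/
def iotaAux {n ℓ m s : ℕ} (P : LadderPresentation n ℓ m s) (f : LadderFlow P) :
    ℕ → MultiTableau
  | 0 => ⟨fun _ _ => 0, fun _ _ _ => 0⟩
  | r + 1 =>
    if h : r < s then
      stepAdd ℓ (P.res ⟨r, h⟩ : ℤ) (r + 1) (f.T ⟨r, h⟩) (iotaAux P f r)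
    else iotaAux P f r

/-- The filling map `ι`. -/
def iotaMap {n ℓ m s : ℕ} (P : LadderPresentation n ℓ m s) (f : LadderFlow P) :
    MultiTableau :=
  iotaAux P f s

/-- Every entry of `{1,…,s}` occurs in `M`. -/
def AllEntriesOccur (s : ℕ) (M : MultiTableau) : Prop :=
  ∀ e, 1 ≤ e → e ≤ s → ∃ t r c, InDiag (M.shape t) r c ∧ M.entry t r c = e

/-- All nodes of `M` have residue in `{1,…,m-1}`. -/
def ResInRange (ℓ m : ℕ) (M : MultiTableau) : Prop :=
  ∀ t r c, InDiag (M.shape t) r c → 1 ≤ resOf ℓ r c ∧ resOf ℓ r c ≤ (m : ℤ) - 1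

/-- `(P, f)` is the image of the multitableau `M` under the growth map `g`:
`i_r` is the common residue of the nodes of `M` with entry `r`, and `T r` is
the set of components of `M` containing a node with entry `r` (the remaining
data of `f`, i.e. the tuples `S`, is forced by the flow conditions, and
`j_r = |T r|` is forced by the flow condition `T_card`). -/
def GrowthData {n ℓ m s : ℕ} (M : MultiTableau) (P : LadderPresentation n ℓ m s)
    (f : LadderFlow P) : Prop :=
  (∀ r : Fin s, ∀ t r' c, InDiag (M.shape t) r' c → M.entry t r' c = r.val + 1 →
    (P.res r : ℤ) = resOf ℓ r' c) ∧
  (∀ r : Fin s, ∀ t,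
    t ∈ f.T r ↔ ∃ r' c, InDiag (M.shape t) r' c ∧ M.entry t r' c = r.val + 1)

/-- `#{(a,b) ∈ A × B : a < b}`. -/
def inv2 (A B : Finset ℕ) : ℕ :=
  ((A ×ˢ B).filter fun ab => ab.1 < ab.2).card

/-- The weight of a flow:
`wt(f) = Σ_r ( inv(S⁽ʳ⁾_{i_r}, T_r) − inv(S⁽ʳ⁻¹⁾_{i_r+1}, T_r) )`. -/
def wtFlow {n ℓ m s : ℕ} (P : LadderPresentation n ℓ m s) (f : LadderFlow P) : ℤ :=
  ∑ r : Fin s,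
    ((inv2 (f.S r.succ (P.res r)) (f.T r) : ℤ) -
      (inv2 (f.S r.castSucc (P.res r + 1)) (f.T r) : ℤ))

/-- The components of `M` (among `{1,…,n}`) containing a node with entry `j`. -/
def compsWith (n : ℕ) (M : MultiTableau) (j : ℕ) : Finset ℕ :=
  (Finset.Icc 1 n).filter fun t => ∃ r c, InDiag (M.shape t) r c ∧ M.entry t r c = j

/-- The shape of `M` with all entries `> j` removed, where moreover in the
components outside `Keep` the nodes with entry `j` are removed as well. -/
def shapeTrunc (M : MultiTableau) (j : ℕ) (Keep : Finset ℕ) : ℕ → ℕ → ℕ :=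
  fun t r =>
    ((Finset.range (M.shape t r)).filter fun c =>
      M.entry t r c ≤ (if t ∈ Keep then j else j - 1)).card

/-- The row of the node with entry `j` in component `t` of `M`. -/
def nodeRow (M : MultiTableau) (j t : ℕ) : ℕ :=
  if h : ∃ r c, InDiag (M.shape t) r c ∧ M.entry t r c = j then h.choose else 0

/-- The column of the node with entry `j` in component `t` of `M`. -/
def nodeCol (M : MultiTableau) (j t : ℕ) : ℕ :=
  if h : ∃ r c, InDiag (M.shape t) r c ∧ M.entry t r c = j then
    h.choose_spec.choose
  else 0

/-- The number of addable nodes of `sh` of residue `ρ` lying strictly after the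
position `(t, r)` in the order `⪯` (at most one addable node of a given residue
per component). -/
def cntAddAfter (n ℓ : ℕ) (sh : ℕ → ℕ → ℕ) (ρ : ℤ) (t r : ℕ) : ℕ :=
  ((Finset.Icc 1 n).filter fun t' => ∃ r' c', IsAddableCell (sh t') r' c' ∧
    resOf ℓ r' c' = ρ ∧ (t' < t ∨ (t' = t ∧ r < r'))).card

/-- The number of removable nodes of `sh` of residue `ρ` lying strictly after
the position `(t, r)` in the order `⪯`. -/
def cntRemAfter (n ℓ : ℕ) (sh : ℕ → ℕ → ℕ) (ρ : ℤ) (t r : ℕ) : ℕ :=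
  ((Finset.Icc 1 n).filter fun t' => ∃ r' c', IsRemovableCell (sh t') r' c' ∧
    resOf ℓ r' c' = ρ ∧ (t' < t ∨ (t' = t ∧ r < r'))).card

/-- The contribution `deg(Tʲ)` of the entry `j` to the Brundan–Kleshchev–Wang
degree of the standard multitableau `M`: listing the nodes with entry `j` as
`N₁ ≺ ⋯ ≺ N_t` (i.e. by decreasing component index), it is
`Σ_p (A_p − R_p) − t(t−1)/2`, where `A_p` (resp. `R_p`) is the number of
addable (resp. removable) nodes of the residue of `N_p`, strictly after `N_p`,
of the multipartition underlying `Tʲ` with the nodes `N_{p+1},…,N_t` removed. -/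
def degStep (n ℓ : ℕ) (M : MultiTableau) (j : ℕ) : ℤ :=
  (∑ t ∈ compsWith n M j,
    ((cntAddAfter n ℓ (shapeTrunc M j ((compsWith n M j).filter fun t' => t ≤ t'))
        (resOf ℓ (nodeRow M j t) (nodeCol M j t)) t (nodeRow M j t) : ℤ) -
      (cntRemAfter n ℓ (shapeTrunc M j ((compsWith n M j).filter fun t' => t ≤ t'))
        (resOf ℓ (nodeRow M j t) (nodeCol M j t)) t (nodeRow M j t) : ℤ))) -
  (((compsWith n M j).card * ((compsWith n M j).card - 1) / 2 : ℕ) : ℤ)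

/-- The Brundan–Kleshchev–Wang degree of a standard multitableau with entries
in `{1,…,s}`. -/
def degBKW (n ℓ s : ℕ) (M : MultiTableau) : ℤ :=
  ∑ j ∈ Finset.Icc 1 s, degStep n ℓ M j

/-- `M` has the residue sequence `((i_1,j_1),…,(i_s,j_s))` recorded by `P`:
for each `r`, exactly `j_r` nodes of `M` carry the entry `r` (equivalently,
under standardness, `j_r` components contain the entry `r`) and they all have
residue `i_r`. -/
def HasResSeq {n ℓ m s : ℕ} (P : LadderPresentation n ℓ m s) (M : MultiTableau) :
    Prop :=
  ∀ r : Fin s,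
    (compsWith n M (r.val + 1)).card = P.mult r ∧
    ∀ t r' c, InDiag (M.shape t) r' c → M.entry t r' c = r.val + 1 →
      resOf ℓ r' c = (P.res r : ℤ)

/-- The multipartition `λ(S)` determined by a boundary tuple `S`: writing
`p_1 < ⋯ < p_ℓ` for the elements of `{ p ∈ {1,…,m} : t ∈ S p }`, the `r`-th
part (1-indexed) of its `t`-th component is `p_{ℓ+1−r} − (ℓ+1−r)`. -/
def shapeOfTuple (ℓ m : ℕ) (Sb : ℕ → Finset ℕ) : ℕ → ℕ → ℕ :=
  fun t r =>
    if r < ℓ then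
      (((Finset.Icc 1 m).filter fun p => t ∈ Sb p).sort (· ≤ ·)).getD (ℓ - 1 - r) 0 -
        (ℓ - r)
    else 0


/-!
Encode a partition `λ` with at most `ℓ` parts by its `ℓ` distinct beta-numbers
`λ_r + ℓ + 1 - r`; the addable node of row `r`, if any, has residue equal to that row's
beta-number, so adding the addable node of residue `i` moves the bead at `i` to the empty
position `i + 1`. A flow step with `t ∈ T_r` does exactly that to the positions `p` with
`t ∈ S_p`, and initially both sets are `{1,…,ℓ}`. Hence, for every component `t`, the
positions holding `t` are at every stage the beta-numbers of the `t`-th component of the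
multitableau built so far, and the parts are read off from the sorted beta-numbers.
-/

def betaSet (ℓ : ℕ) (q : ℕ → ℕ) : Finset ℕ :=
  (Finset.range ℓ).image fun i => q i + (ℓ - i)

structure AtMostParts (ℓ : ℕ) (q : ℕ → ℕ) : Prop where
  antitone : Antitone q
  eq_zero : ∀ r, ℓ ≤ r → q r = 0

section Beta

variable {ℓ : ℕ} {q : ℕ → ℕ}

lemma strictAntiOn_betaNumber (hq : Antitone q) :
    StrictAntiOn (fun i => q i + (ℓ - i)) (Set.Iio ℓ) := by
  intro a _ b hb hab
  have := hq hab.le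
  simp only [Set.mem_Iio] at hb
  show q b + (ℓ - b) < q a + (ℓ - a)
  omega

lemma mem_betaSet {p : ℕ} : p ∈ betaSet ℓ q ↔ ∃ i < ℓ, q i + (ℓ - i) = p := by
  simp only [betaSet, Finset.mem_image, Finset.mem_range]

lemma sort_betaSet (hq : Antitone q) :
    (betaSet ℓ q).sort (· ≤ ·) = ((List.range ℓ).map fun i => q i + (ℓ - i)).reverse := by
  set L := (List.range ℓ).map fun i => q i + (ℓ - i)
  have hL : L.reverse.Pairwise (· < ·) := by
    refine List.pairwise_reverse.2 (List.pairwise_map.2 (List.pairwise_lt_range.imp_of_mem ?_))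
    intro a b ha hb hab
    exact strictAntiOn_betaNumber hq (by simpa using ha) (by simpa using hb) hab
  have hset : betaSet ℓ q = L.reverse.toFinset := by
    ext p
    simp [L, mem_betaSet]
  rw [hset]
  exact (List.toFinset_sort _ hL.nodup).2 (hL.imp le_of_lt)

lemma card_betaSet (hq : Antitone q) : (betaSet ℓ q).card = ℓ := by
  rw [← Finset.length_sort (· ≤ ·), sort_betaSet hq, List.length_reverse, List.length_map,
    List.length_range]

lemma getD_sort_betaSet (hq : Antitone q) {r : ℕ} (hr : r < ℓ) :
    ((betaSet ℓ q).sort (· ≤ ·)).getD (ℓ - 1 - r) 0 = q r + (ℓ - r) := by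
  have hlen : ((List.range ℓ).map fun i => q i + (ℓ - i)).length = ℓ := by
    rw [List.length_map, List.length_range]
  rw [sort_betaSet hq, List.getD_reverse _ (by omega), hlen,
    List.getD_eq_getElem _ _ (by omega), List.getElem_map, List.getElem_range,
    show ℓ - 1 - (ℓ - 1 - r) = r by omega]

lemma AtMostParts.eq_of_betaSet_eq {q' : ℕ → ℕ} (hq : AtMostParts ℓ q) (hq' : AtMostParts ℓ q')
    (h : betaSet ℓ q = betaSet ℓ q') : q = q' := by
  funext r
  rcases lt_or_ge r ℓ with hr | hr
  · have := getD_sort_betaSet hq.antitone hr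
    rw [h, getD_sort_betaSet hq'.antitone hr] at this
    omega
  · rw [hq.eq_zero r hr, hq'.eq_zero r hr]

lemma betaSet_zero : betaSet ℓ (fun _ => 0) = Finset.Icc 1 ℓ := by
  ext p
  simp only [mem_betaSet, Finset.mem_Icc, zero_add]
  exact ⟨fun ⟨i, hi, e⟩ => by omega, fun hp => ⟨ℓ - p, by omega, by omega⟩⟩

lemma atMostParts_zero : AtMostParts ℓ (fun _ => 0) :=
  ⟨antitone_const, fun _ _ => rfl⟩

lemma addable_of_succ_notMem_betaSet (hq : Antitone q) {r : ℕ} (hr : r < ℓ)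
    (h : q r + (ℓ - r) + 1 ∉ betaSet ℓ q) : r = 0 ∨ q r < q (r - 1) := by
  refine or_iff_not_imp_left.2 fun hr0 => lt_of_le_of_ne (hq (Nat.sub_le r 1)) fun he => h ?_
  exact mem_betaSet.2 ⟨r - 1, by omega, by omega⟩

lemma AtMostParts.addRes_eq_update (hq : AtMostParts ℓ q) {r : ℕ} (hr : r < ℓ)
    (hadd : r = 0 ∨ q r < q (r - 1)) :
    addRes ℓ q (q r + (ℓ - r) : ℕ) = Function.update q r (q r + 1) := by
  have hex : ∃ r', (r' = 0 ∨ q r' < q (r' - 1)) ∧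
      (q r' : ℤ) - (r' : ℤ) + (ℓ : ℤ) = ((q r + (ℓ - r) : ℕ) : ℤ) := ⟨r, hadd, by omega⟩
  obtain ⟨-, hres⟩ := hex.choose_spec
  have hlt : hex.choose < ℓ := by
    by_contra! hge
    have := hq.eq_zero _ hge
    omega
  have hchoose : hex.choose = r :=
    (strictAntiOn_betaNumber hq.antitone).injOn hlt hr (by omega)
  rw [addRes, dif_pos hex, hchoose]

lemma AtMostParts.update_succ (hq : AtMostParts ℓ q) {r : ℕ} (hr : r < ℓ)
    (hadd : r = 0 ∨ q r < q (r - 1)) : AtMostParts ℓ (Function.update q r (q r + 1)) := by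
  refine ⟨antitone_nat_of_succ_le fun j => ?_, fun j hj => ?_⟩
  · have := hq.antitone (Nat.le_add_right j 1)
    rcases eq_or_ne (j + 1) r with rfl | h
    · rw [Function.update_self, Function.update_of_ne (by omega)]
      rw [Nat.add_sub_cancel] at hadd
      omega
    · rcases eq_or_ne j r with rfl | h'
      · rw [Function.update_self, Function.update_of_ne h]
        omega
      · rw [Function.update_of_ne h, Function.update_of_ne h']
        exact this
  · rw [Function.update_of_ne (by omega), hq.eq_zero j hj]

lemma betaSet_update_succ (hq : Antitone q) {r : ℕ} (hr : r < ℓ) :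
    betaSet ℓ (Function.update q r (q r + 1)) =
      insert (q r + (ℓ - r) + 1) ((betaSet ℓ q).erase (q r + (ℓ - r))) := by
  ext p
  simp only [Finset.mem_insert, Finset.mem_erase, mem_betaSet]
  constructor
  · rintro ⟨j, hj, rfl⟩
    rcases eq_or_ne j r with rfl | h
    · left
      rw [Function.update_self]
      omega
    · rw [Function.update_of_ne h]
      exact Or.inr ⟨fun he => h ((strictAntiOn_betaNumber hq).injOn hj hr he), j, hj, rfl⟩
  · rintro (rfl | ⟨hne, j, hj, rfl⟩)
    · exact ⟨r, hr, by rw [Function.update_self]; omega⟩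
    · have h : j ≠ r := by rintro rfl; exact hne rfl
      exact ⟨j, hj, by rw [Function.update_of_ne h]⟩

theorem AtMostParts.addRes (hq : AtMostParts ℓ q) {i : ℕ} (hi : i ∈ betaSet ℓ q)
    (hi1 : i + 1 ∉ betaSet ℓ q) :
    AtMostParts ℓ (addRes ℓ q i) ∧
      betaSet ℓ (addRes ℓ q i) = insert (i + 1) ((betaSet ℓ q).erase i) := by
  obtain ⟨r, hr, rfl⟩ := mem_betaSet.1 hi
  have hadd := addable_of_succ_notMem_betaSet hq.antitone hr hi1
  rw [hq.addRes_eq_update hr hadd]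
  exact ⟨hq.update_succ hr hadd, betaSet_update_succ hq.antitone hr⟩

end Beta

namespace LadderFlow

variable {n ℓ m s : ℕ} {P : LadderPresentation n ℓ m s} (f : LadderFlow P)

def positions (k : Fin (s + 1)) (t : ℕ) : Finset ℕ :=
  (Finset.Icc 1 m).filter fun p => t ∈ f.S k p

lemma positions_zero (hℓm : ℓ ≤ m) {t : ℕ} (ht : t ∈ Finset.Icc 1 n) :
    f.positions 0 t = Finset.Icc 1 ℓ := by
  ext p
  simp only [positions, Finset.mem_filter, Finset.mem_Icc]
  constructor
  · rintro ⟨⟨hp1, hpm⟩, hmem⟩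
    rw [f.S_init p hp1 hpm] at hmem
    split_ifs at hmem with hpℓ
    · exact ⟨hp1, hpℓ⟩
    · exact absurd hmem (Finset.notMem_empty t)
  · rintro ⟨hp1, hpℓ⟩
    refine ⟨⟨hp1, hpℓ.trans hℓm⟩, ?_⟩
    rwa [f.S_init p hp1 (hpℓ.trans hℓm), if_pos hpℓ]

lemma S_eq_iff_forall_positions_eq {s' : ℕ} {P' : LadderPresentation n ℓ m s'}
    (f' : LadderFlow P') (k : Fin (s + 1)) (k' : Fin (s' + 1)) :
    f.S k = f'.S k' ↔ ∀ t ∈ Finset.Icc 1 n, f.positions k t = f'.positions k' t := by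
  refine ⟨fun h t _ => by rw [positions, positions, h], fun h => ?_⟩
  funext p
  ext t
  by_cases ht : t ∈ Finset.Icc 1 n
  · by_cases hp : p ∈ Finset.Icc 1 m
    · have := congrArg (p ∈ ·) (h t ht)
      simpa only [positions, Finset.mem_filter, hp, true_and, eq_iff_iff] using this
    · rw [Finset.mem_Icc] at hp
      rw [f.S_outside _ p (by omega), f'.S_outside _ p (by omega)]
  · exact iff_of_false (fun hS => ht (f.S_sub _ _ hS)) (fun hS => ht (f'.S_sub _ _ hS))

variable {f}

lemma mem_S_succ_of_mem_T {r : Fin s} {t : ℕ} (hT : t ∈ f.T r) (p : ℕ) :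
    t ∈ f.S r.succ p ↔ p = P.res r + 1 ∨ p ≠ P.res r ∧ t ∈ f.S r.castSucc p := by
  by_cases hp : p = P.res r
  · subst hp
    simp [f.S_step_res, hT]
  by_cases hp1 : p = P.res r + 1
  · subst hp1
    simp [f.S_step_res1, hT]
  · simp [f.S_step_other r p hp hp1, hp, hp1]

lemma mem_S_succ_of_notMem_T {r : Fin s} {t : ℕ} (hT : t ∉ f.T r) (p : ℕ) :
    t ∈ f.S r.succ p ↔ t ∈ f.S r.castSucc p := by
  by_cases hp : p = P.res r
  · subst hp
    simp [f.S_step_res, hT]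
  by_cases hp1 : p = P.res r + 1
  · subst hp1
    simp [f.S_step_res1, hT]
  · rw [f.S_step_other r p hp hp1]

lemma res_mem_positions {r : Fin s} {t : ℕ} (hT : t ∈ f.T r) :
    P.res r ∈ f.positions r.castSucc t :=
  Finset.mem_filter.2
    ⟨Finset.mem_Icc.2 ⟨P.res_pos r, (P.res_lt r).le⟩, f.T_sub r hT⟩

lemma res_add_one_notMem_positions {r : Fin s} {t : ℕ} (hT : t ∈ f.T r) :
    P.res r + 1 ∉ f.positions r.castSucc t :=
  fun h => Finset.disjoint_left.1 (f.T_disj r) hT (Finset.mem_filter.1 h).2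

lemma positions_succ_of_mem_T {r : Fin s} {t : ℕ} (hT : t ∈ f.T r) :
    f.positions r.succ t =
      insert (P.res r + 1) ((f.positions r.castSucc t).erase (P.res r)) := by
  have hi := P.res_lt r
  ext p
  simp only [positions, Finset.mem_filter, Finset.mem_insert, Finset.mem_erase,
    mem_S_succ_of_mem_T hT]
  constructor
  · rintro ⟨hpm, rfl | ⟨hne, hS⟩⟩
    · exact Or.inl rfl
    · exact Or.inr ⟨hne, hpm, hS⟩
  · rintro (rfl | ⟨hne, hpm, hS⟩)
    · exact ⟨Finset.mem_Icc.2 ⟨by omega, hi⟩, Or.inl rfl⟩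
    · exact ⟨hpm, Or.inr ⟨hne, hS⟩⟩

lemma positions_succ_of_notMem_T {r : Fin s} {t : ℕ} (hT : t ∉ f.T r) :
    f.positions r.succ t = f.positions r.castSucc t := by
  ext p
  simp only [positions, Finset.mem_filter, mem_S_succ_of_notMem_T hT]

end LadderFlow

section Filling

variable {n ℓ m s : ℕ} {P : LadderPresentation n ℓ m s} (f : LadderFlow P)

lemma iotaAux_shape_succ (r : Fin s) (t : ℕ) :
    (iotaAux P f (r + 1)).shape t =
      if t ∈ f.T r then addRes ℓ ((iotaAux P f r).shape t) (P.res r)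
      else (iotaAux P f r).shape t := by
  simp only [iotaAux, dif_pos r.isLt, stepAdd]

lemma iotaAux_shape_of_notMem {t : ℕ} (ht : t ∉ Finset.Icc 1 n) (k : ℕ) :
    (iotaAux P f k).shape t = 0 := by
  induction k with
  | zero => rfl
  | succ k ih =>
    by_cases hk : k < s
    · have hT : t ∉ f.T ⟨k, hk⟩ := fun hT => ht (f.S_sub _ _ (f.T_sub _ hT))
      rw [show k = (⟨k, hk⟩ : Fin s).val from rfl, iotaAux_shape_succ, if_neg hT, ih]
    · simpa only [iotaAux, dif_neg hk] using ih

theorem atMostParts_and_betaSet_eq_positions (hℓm : ℓ ≤ m) {t : ℕ} (ht : t ∈ Finset.Icc 1 n)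
    (k : Fin (s + 1)) :
    AtMostParts ℓ ((iotaAux P f k).shape t) ∧
      betaSet ℓ ((iotaAux P f k).shape t) = f.positions k t := by
  induction k using Fin.induction with
  | zero => exact ⟨atMostParts_zero, by rw [f.positions_zero hℓm ht]; exact betaSet_zero⟩
  | succ r ih =>
    obtain ⟨hq, hB⟩ := ih
    rw [Fin.val_castSucc] at hq hB
    rw [Fin.val_succ, iotaAux_shape_succ]
    split_ifs with hT
    · obtain ⟨hq', hB'⟩ := hq.addRes (hB ▸ LadderFlow.res_mem_positions hT)
        (hB ▸ LadderFlow.res_add_one_notMem_positions hT)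
      exact ⟨hq', by rw [hB', hB, LadderFlow.positions_succ_of_mem_T hT]⟩
    · exact ⟨hq, by rw [hB, LadderFlow.positions_succ_of_notMem_T hT]⟩

lemma iotaMap_shape_eq_iff {s' : ℕ} {P' : LadderPresentation n ℓ m s'} (f' : LadderFlow P') :
    (iotaMap P f).shape = (iotaMap P' f').shape ↔
      ∀ t ∈ Finset.Icc 1 n, (iotaMap P f).shape t = (iotaMap P' f').shape t := by
  refine ⟨fun h t _ => congrFun h t, fun h => funext fun t => ?_⟩
  by_cases ht : t ∈ Finset.Icc 1 n
  · exact h t ht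
  · rw [iotaMap, iotaMap, iotaAux_shape_of_notMem f ht, iotaAux_shape_of_notMem f' ht]

end Filling

theorem shape_from_boundary_general (n ℓ m : ℕ) (hm : ℓ + 1 ≤ m) (s : ℕ)
    (P : LadderPresentation n ℓ m s) (f : LadderFlow P) :
    (∀ t, 1 ≤ t → t ≤ n →
      ((Finset.Icc 1 m).filter fun p => t ∈ f.S (Fin.last s) p).card = ℓ ∧
      (∀ r, 1 ≤ r → r ≤ ℓ →
        ((iotaMap P f).shape t (r - 1) : ℤ) =
          ((((Finset.Icc 1 m).filter fun p =>
              t ∈ f.S (Fin.last s) p).sort (· ≤ ·)).getD (ℓ - r) 0 : ℤ) -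
            ((ℓ : ℤ) + 1 - (r : ℤ))) ∧
      (∀ r, ℓ ≤ r → (iotaMap P f).shape t r = 0)) ∧
    (∀ (s' : ℕ) (P' : LadderPresentation n ℓ m s'), IsValid P' →
      ∀ f' : LadderFlow P',
        ((iotaMap P f).shape = (iotaMap P' f').shape ↔
          f.S (Fin.last s) = f'.S (Fin.last s'))) := by
  refine ⟨fun t ht1 ht2 => ?_, fun s' P' _ f' => ?_⟩
  · obtain ⟨hq, hB⟩ : AtMostParts ℓ ((iotaMap P f).shape t) ∧
        betaSet ℓ ((iotaMap P f).shape t) = f.positions (Fin.last s) t :=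
      atMostParts_and_betaSet_eq_positions f (by omega) (Finset.mem_Icc.2 ⟨ht1, ht2⟩) (Fin.last s)
    rw [LadderFlow.positions] at hB
    refine ⟨hB ▸ card_betaSet hq.antitone, fun r hr1 hr2 => ?_, hq.eq_zero⟩
    have := getD_sort_betaSet hq.antitone (show r - 1 < ℓ by omega)
    rw [hB, show ℓ - 1 - (r - 1) = ℓ - r by omega] at this
    rw [this]
    push_cast
    omega
  · rw [iotaMap_shape_eq_iff, f.S_eq_iff_forall_positions_eq]
    refine forall₂_congr fun t ht => ?_
    obtain ⟨hq, hB⟩ := atMostParts_and_betaSet_eq_positions f (by omega) ht (Fin.last s)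
    obtain ⟨hq', hB'⟩ := atMostParts_and_betaSet_eq_positions f' (by omega) ht (Fin.last s')
    rw [← hB, ← hB']
    exact ⟨congrArg _, hq.eq_of_betaSet_eq hq'⟩

theorem shape_from_boundary (n ℓ m : ℕ) (hn : 2 ≤ n) (hℓ : 1 ≤ ℓ)
    (hm : ℓ + 1 ≤ m) (s : ℕ) (P : LadderPresentation n ℓ m s) (hP : IsValid P)
    (f : LadderFlow P) :
    (∀ t, 1 ≤ t → t ≤ n →
      ((Finset.Icc 1 m).filter fun p => t ∈ f.S (Fin.last s) p).card = ℓ ∧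
      (∀ r, 1 ≤ r → r ≤ ℓ →
        ((iotaMap P f).shape t (r - 1) : ℤ) =
          ((((Finset.Icc 1 m).filter fun p =>
              t ∈ f.S (Fin.last s) p).sort (· ≤ ·)).getD (ℓ - r) 0 : ℤ) -
            ((ℓ : ℤ) + 1 - (r : ℤ))) ∧
      (∀ r, ℓ ≤ r → (iotaMap P f).shape t r = 0)) ∧
    (∀ (s' : ℕ) (P' : LadderPresentation n ℓ m s'), IsValid P' →
      ∀ f' : LadderFlow P',
        ((iotaMap P f).shape = (iotaMap P' f').shape ↔
          f.S (Fin.last s) = f'.S (Fin.last s'))) :=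
  shape_from_boundary_general n ℓ m hm s P f

end

end SlnWeb
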